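/- arXiv:2003.13775 — 3 statements merged into one kernel-verified Lean document; each statement's English description precedes it below -/
import Mathlib

section
/- Consider the chemical hypergraph with three vertices 1,2,3 and a single oriented hyperedge with input set {1} and output set {2,3}. The function u with u(1) = 1, u(2) = u(3) = 1/2 satisfies Δ̃u = 0, where Δ̃ is the hypergraph Laplacian; hence the kernel of Δ̃ contains a non-constant function even though the hypergraph is connected. -/
open Finset

/-- A chemical hypergraph on `N` vertices with `M` oriented hyperedges, each hyperedge `h`
having an input set `inputs h` and an output set `outputs h`. -/
structure ChemHypergraph (N M : ℕ) where
  inputs : Fin M → Finset (Fin N)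
  outputs : Fin M → Finset (Fin N)

/-- The degree of a vertex: the number of hyperedges containing it. -/
def ChemHypergraph.deg {N M : ℕ} (C : ChemHypergraph N M) (i : Fin N) : ℕ :=
  (Finset.univ.filter fun h => i ∈ C.inputs h ∪ C.outputs h).card

/-- `δ_h(u) = Σ_{i' ∈ V_h} u i' − Σ_{j' ∈ W_h} u j'`. -/
def ChemHypergraph.edgeDelta {N M : ℕ} (C : ChemHypergraph N M) (u : Fin N → ℝ)
    (h : Fin M) : ℝ :=
  ∑ j ∈ C.inputs h, u j - ∑ j ∈ C.outputs h, u j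

/-- The hypergraph Laplacian of a chemical hypergraph:
`(Δ̃u)(i) = (1/deg i)[ Σ_{h : i input} δ_h(u) − Σ_{h : i output} δ_h(u) ]`. -/
noncomputable def ChemHypergraph.lap {N M : ℕ} (C : ChemHypergraph N M)
    (u : Fin N → ℝ) (i : Fin N) : ℝ :=
  ((C.deg i : ℝ))⁻¹ *
    ((∑ h ∈ Finset.univ.filter fun h => i ∈ C.inputs h, C.edgeDelta u h) -
      ∑ h ∈ Finset.univ.filter fun h => i ∈ C.outputs h, C.edgeDelta u h)

/-- For the chemical hypergraph with vertices `{1,2,3}` and the single hyperedge with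
input `{1}` and outputs `{2,3}`, the non-constant function `u = (1, 1/2, 1/2)` lies in
the kernel of the hypergraph Laplacian. -/
theorem singleHyperedge_nonconstant_kernel :
    (ChemHypergraph.lap (⟨fun _ => {0}, fun _ => {1, 2}⟩ : ChemHypergraph 3 1) ![1, 1/2, 1/2] = 0) ∧
    ¬ (∀ i j : Fin 3, (![1, 1/2, 1/2] : Fin 3 → ℝ) i = (![1, 1/2, 1/2] : Fin 3 → ℝ) j) := by
  constructor
  · funext i
    fin_cases i <;>
      simp [ChemHypergraph.lap, ChemHypergraph.deg, ChemHypergraph.edgeDelta,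
        Finset.filter_true_of_mem, Fin.sum_univ_succ] <;>
      norm_num [Finset.filter_eq', Finset.sum_insert, Finset.mem_insert]
  · intro h
    have := h 0 1
    norm_num at this
end

section
/- The hypergraph Laplacian Δ̃ has only nonnegative real eigenvalues: for any function u on the vertices, the degree-weighted inner product ⟨Δ̃u, u⟩ = Σ_i deg(i) (Δ̃u)(i) u(i) equals Σ_h (Σ_{i' ∈ V_h} u(i') − Σ_{j' ∈ W_h} u(j'))² ≥ 0. -/
open Finset

lemma ChemHypergraph.key {N M : ℕ} (C : ChemHypergraph N M)
    (hdeg : ∀ i, 0 < C.deg i) (u : Fin N → ℝ) :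
    ∑ i, (C.deg i : ℝ) * C.lap u i * u i = ∑ h, (C.edgeDelta u h) ^ 2 := by
  have hd : ∀ i, (C.deg i : ℝ) * C.lap u i =
      (∑ h ∈ Finset.univ.filter fun h => i ∈ C.inputs h, C.edgeDelta u h) -
        ∑ h ∈ Finset.univ.filter fun h => i ∈ C.outputs h, C.edgeDelta u h := by
    intro i
    have : (C.deg i : ℝ) ≠ 0 := Nat.cast_ne_zero.mpr (hdeg i).ne'
    rw [ChemHypergraph.lap, ← mul_assoc, mul_inv_cancel₀ this, one_mul]
  calc ∑ i, (C.deg i : ℝ) * C.lap u i * u i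
      = ∑ i, ((∑ h ∈ Finset.univ.filter fun h => i ∈ C.inputs h, C.edgeDelta u h * u i) -
          ∑ h ∈ Finset.univ.filter fun h => i ∈ C.outputs h, C.edgeDelta u h * u i) := by
        refine Finset.sum_congr rfl fun i _ => ?_
        rw [hd i, sub_mul, ← Finset.sum_mul, ← Finset.sum_mul]
    _ = (∑ i, ∑ h ∈ Finset.univ.filter fun h => i ∈ C.inputs h, C.edgeDelta u h * u i) -
          ∑ i, ∑ h ∈ Finset.univ.filter fun h => i ∈ C.outputs h, C.edgeDelta u h * u i := by
        rw [Finset.sum_sub_distrib]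
    _ = (∑ h, ∑ i ∈ C.inputs h, C.edgeDelta u h * u i) -
          ∑ h, ∑ i ∈ C.outputs h, C.edgeDelta u h * u i := by
        congr 1 <;>
        · simp only [Finset.sum_filter]
          rw [Finset.sum_comm]
          refine Finset.sum_congr rfl fun h _ => ?_
          rw [Finset.sum_ite_mem, Finset.univ_inter]
    _ = ∑ h, (C.edgeDelta u h) ^ 2 := by
        rw [← Finset.sum_sub_distrib]
        refine Finset.sum_congr rfl fun h _ => ?_
        rw [← Finset.mul_sum, ← Finset.mul_sum, ← mul_sub, ChemHypergraph.edgeDelta, sq]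

/-- The hypergraph Laplacian is positive semidefinite with respect to the degree-weighted
inner product: `⟨Δ̃u, u⟩ = Σ_i deg i · (Δ̃u)(i) · u(i) = Σ_h δ_h(u)² ≥ 0`.  In particular
all (real) eigenvalues of `Δ̃` are nonnegative. -/
theorem hypergraphLaplacian_posSemidef {N M : ℕ} (C : ChemHypergraph N M)
    (hdeg : ∀ i, 0 < C.deg i) (u : Fin N → ℝ) :
    (∑ i, (C.deg i : ℝ) * C.lap u i * u i = ∑ h, (C.edgeDelta u h) ^ 2) ∧
    (0 ≤ ∑ i, (C.deg i : ℝ) * C.lap u i * u i) ∧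
    (∀ μ : ℝ, ∀ v : Fin N → ℝ, v ≠ 0 → C.lap v = μ • v → 0 ≤ μ) := by
  refine ⟨C.key hdeg u, ?_, ?_⟩
  · rw [C.key hdeg u]; positivity
  · intro μ v hv hev
    have hk := C.key hdeg v
    have hnn : 0 ≤ ∑ h, (C.edgeDelta v h) ^ 2 := by positivity
    have hμS : ∑ i, (C.deg i : ℝ) * C.lap v i * v i = μ * ∑ i, (C.deg i : ℝ) * v i ^ 2 := by
      rw [Finset.mul_sum]
      refine Finset.sum_congr rfl fun i _ => ?_
      rw [hev]; simp [sq]; ring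
    have hSpos : 0 < ∑ i, (C.deg i : ℝ) * v i ^ 2 := by
      obtain ⟨i, hi⟩ := Function.ne_iff.mp hv
      refine Finset.sum_pos' (fun j _ => by positivity) ⟨i, Finset.mem_univ i, ?_⟩
      have h2 : (0:ℝ) < v i ^ 2 := pow_two_pos_of_ne_zero hi
      have hdi : (0:ℝ) < (C.deg i : ℝ) := by exact_mod_cast hdeg i
      exact mul_pos hdi h2
    have : 0 ≤ μ * ∑ i, (C.deg i : ℝ) * v i ^ 2 := by rw [← hμS, hk]; exact hnn
    nlinarith
end

section
/- Consider the chemical hypergraph on three vertices {1,2,3} with three hyperedges h_i (i = 1,2,3), where V_{h_i} = {i} and W_{h_i} = {i+1, i+2} (indices mod 3). Then the kernel of the hypergraph Laplacian Δ̃ is trivial, i.e. all eigenvalues of Δ̃ are strictly positive. -/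
open Finset

lemma lap_eq (u : Fin 3 → ℝ) (i : Fin 3) :
    ChemHypergraph.lap (⟨fun i => {i}, fun i => {i + 1, i + 2}⟩ : ChemHypergraph 3 3) u i
      = u i - (3:ℝ)⁻¹ * (u (i+1) + u (i+2)) := by
  fin_cases i <;>
    simp (config := {decide := true}) [ChemHypergraph.lap, ChemHypergraph.deg,
      ChemHypergraph.edgeDelta, Finset.sum_filter, Fin.sum_univ_three, Fin.isValue,
      show ((1:Fin 3)+1) = 2 from rfl, show ((1:Fin 3)+2) = 0 from rfl,
      show ((2:Fin 3)+1) = 0 from rfl, show ((2:Fin 3)+2) = 1 from rfl] <;> rw [Finset.filter_true_of_mem (by decide)] <;> simp [Finset.card_univ] <;> ring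


/-- For the chemical hypergraph on three vertices with hyperedges `h_i` having input
`{i}` and outputs `{i+1, i+2}` (mod 3), the kernel of the hypergraph Laplacian is
trivial, and hence every (real) eigenvalue of the Laplacian is strictly positive. -/
theorem threeCycle_hypergraph_trivial_kernel :
    (∀ u : Fin 3 → ℝ,
      ChemHypergraph.lap
        (⟨fun i => {i}, fun i => {i + 1, i + 2}⟩ : ChemHypergraph 3 3) u = 0 → u = 0) ∧
    (∀ (μ : ℝ) (u : Fin 3 → ℝ), u ≠ 0 →
      ChemHypergraph.lap
        (⟨fun i => {i}, fun i => {i + 1, i + 2}⟩ : ChemHypergraph 3 3) u = μ • u →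
      0 < μ) := by
  have fin1 : ((0:Fin 3)+1) = 1 := rfl
  have fin2 : ((0:Fin 3)+2) = 2 := rfl
  have fin3 : ((1:Fin 3)+1) = 2 := rfl
  have fin4 : ((1:Fin 3)+2) = 0 := rfl
  have fin5 : ((2:Fin 3)+1) = 0 := rfl
  have fin6 : ((2:Fin 3)+2) = 1 := rfl
  constructor
  · intro u h
    have h0 := congrFun h 0
    have h1 := congrFun h 1
    have h2 := congrFun h 2
    rw [lap_eq] at h0 h1 h2
    simp only [fin1, fin2, fin3, fin4, fin5, fin6, Pi.zero_apply] at h0 h1 h2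
    funext i
    fin_cases i <;> simp <;> linarith
  · intro μ u hu h
    have h0 := congrFun h 0
    have h1 := congrFun h 1
    have h2 := congrFun h 2
    rw [lap_eq] at h0 h1 h2
    simp only [fin1, fin2, fin3, fin4, fin5, fin6, Pi.smul_apply, smul_eq_mul] at h0 h1 h2
    obtain ⟨i, hi⟩ := Function.ne_iff.mp hu
    by_cases hS : u 0 + u 1 + u 2 = 0
    · have key : 4/3 - μ = 0 := by
        fin_cases i <;> simp only [Fin.isValue, Pi.zero_apply] at hi
        · exact (mul_eq_zero.mp
            (show (4/3-μ)*u 0 = 0 by linear_combination h0 + (1/3)*hS)).resolve_right hi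
        · exact (mul_eq_zero.mp
            (show (4/3-μ)*u 1 = 0 by linear_combination h1 + (1/3)*hS)).resolve_right hi
        · exact (mul_eq_zero.mp
            (show (4/3-μ)*u 2 = 0 by linear_combination h2 + (1/3)*hS)).resolve_right hi
      linarith
    · have key : (1/3 - μ) * (u 0 + u 1 + u 2) = 0 := by
        linear_combination h0 + h1 + h2
      have := (mul_eq_zero.mp key).resolve_right hS
      linarith
end
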